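/- arXiv:1604.03182 — 5 statements merged into one kernel-verified Lean document; each statement's English description precedes it below -/
import Mathlib

section
/- Let X, Y be real symmetric N×N matrices with Y positive definite, set Z = X + iY and C = i Y^{-1/2} [−Z, I_N] ∈ ℂ^{N×2N}. Then Σ · Im(C† C) = −I_{2N}, where Σ = [[0, I_N], [−I_N, 0]], C† is the conjugate transpose of C, and Im denotes the entrywise imaginary part. -/
/-!
Write `C = P + iQ` with `P, Q` real, so that `Im (Cᴴ C) = PᵀQ - QᵀP`. With `W = Y^{-1/2}`
one has `P = W [Y, 0]` and `Q = W [-X, I]`, hence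
`Im (Cᴴ C) = [Y, 0]ᵀ Y⁻¹ [-X, I] - [-X, I]ᵀ Y⁻¹ [Y, 0]`, which is `-J` for the standard
symplectic matrix `J = [[0, -I], [I, 0]]` as soon as `X` is symmetric.
Since `Σ = -J` and `J² = -1`, the product is `-1`.
-/

open Matrix

lemma Matrix.im_conjTranspose_mul_self {m n : Type*} [Fintype m] (C : Matrix m n ℂ) :
    (Cᴴ * C).map Complex.im
      = (C.map Complex.re)ᵀ * C.map Complex.im - (C.map Complex.im)ᵀ * C.map Complex.re := by
  ext i j
  simp only [map_apply, mul_apply, sub_apply, transpose_apply, conjTranspose_apply,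
    Complex.im_sum, ← Finset.sum_sub_distrib, Complex.star_def, Complex.mul_im,
    Complex.conj_re, Complex.conj_im]
  exact Finset.sum_congr rfl fun _ _ => by ring

section

variable {n : Type*} [Fintype n] [DecidableEq n]

lemma map_re_I_smul_ofReal_mul_fromCols (W X Y : Matrix n n ℝ) :
    (Complex.I • (W.map (fun a => (a : ℂ)) *
      fromCols (-(X.map (fun a => (a : ℂ)) + Complex.I • Y.map (fun a => (a : ℂ))))
        (1 : Matrix n n ℂ))).map Complex.re = W * fromCols Y 0 := by
  ext i (j | j) <;> simp [mul_apply, Complex.re_sum]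

lemma map_im_I_smul_ofReal_mul_fromCols (W X Y : Matrix n n ℝ) :
    (Complex.I • (W.map (fun a => (a : ℂ)) *
      fromCols (-(X.map (fun a => (a : ℂ)) + Complex.I • Y.map (fun a => (a : ℂ))))
        (1 : Matrix n n ℂ))).map Complex.im = W * fromCols (-X) 1 := by
  ext i (j | j) <;> simp [mul_apply, Complex.im_sum, one_apply]

lemma fromCols_transpose_mul_inv_mul_fromCols_sub {R : Type*} [CommRing R]
    (X Y : Matrix n n R) (hX : X.IsSymm) (hY : Y.IsSymm) (hYdet : IsUnit Y.det) :
    (fromCols Y 0)ᵀ * Y⁻¹ * fromCols (-X) 1 - (fromCols (-X) 1)ᵀ * Y⁻¹ * fromCols Y 0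
      = -J n R := by
  rw [Matrix.mul_assoc, Matrix.mul_assoc, mul_fromCols Y⁻¹ (-X), mul_fromCols Y⁻¹ Y,
    transpose_fromCols, transpose_fromCols, fromRows_mul_fromCols, fromRows_mul_fromCols,
    hY.eq, transpose_neg, hX.eq]
  simp [J, mul_nonsing_inv _ hYdet, mul_nonsing_inv_cancel_left _ _ hYdet,
    nonsing_inv_mul _ hYdet, sub_eq_add_neg, fromBlocks_neg, fromBlocks_add]

end

theorem stmt3_general (N : ℕ)
    (X Y Ysq : Matrix (Fin N) (Fin N) ℝ)
    (hX : X.IsSymm) (hY : Y.IsSymm) (hYpd : Y.PosDef)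
    (hYsqSym : Ysq.IsSymm) (hYsq : Ysq * Ysq = Y)
    (Z : Matrix (Fin N) (Fin N) ℂ)
    (hZ : Z = X.map (fun a => (a : ℂ)) + Complex.I • Y.map (fun a => (a : ℂ)))
    (C : Matrix (Fin N) (Fin N ⊕ Fin N) ℂ)
    (hC : C = Complex.I • ((Ysq⁻¹).map (fun a => (a : ℂ)) * fromCols (-Z) 1))
    (Sg : Matrix (Fin N ⊕ Fin N) (Fin N ⊕ Fin N) ℝ)
    (hSg : Sg = fromBlocks 0 1 (-1) 0) :
    Sg * (Cᴴ * C).map Complex.im = -1 := by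
  have hWsymm : (Ysq⁻¹)ᵀ = Ysq⁻¹ := by rw [transpose_nonsing_inv, hYsqSym.eq]
  have hWW : Ysq⁻¹ * Ysq⁻¹ = Y⁻¹ := by rw [← hYsq, Matrix.mul_inv_rev]
  have hIm : (Cᴴ * C).map Complex.im = -J (Fin N) ℝ := by
    rw [im_conjTranspose_mul_self, hC, hZ, map_re_I_smul_ofReal_mul_fromCols,
      map_im_I_smul_ofReal_mul_fromCols, transpose_mul, transpose_mul, hWsymm,
      ← fromCols_transpose_mul_inv_mul_fromCols_sub X Y hX hY hYpd.det_pos.ne'.isUnit, ← hWW]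
    simp only [Matrix.mul_assoc]
  have hSgJ : Sg = -J (Fin N) ℝ := by simp [hSg, J, fromBlocks_neg]
  rw [hIm, hSgJ, neg_mul_neg, J_squared]

/-- Σ · Im(C†C) = −I for C = i Y^{-1/2}[−Z, I]. -/
theorem stmt3 (N : ℕ) (hN : 0 < N)
    (X Y Ysq : Matrix (Fin N) (Fin N) ℝ)
    (hX : X.IsSymm) (hY : Y.IsSymm) (hYpd : Y.PosDef)
    (hYsqPD : Ysq.PosDef) (hYsqSym : Ysq.IsSymm) (hYsq : Ysq * Ysq = Y)
    (Z : Matrix (Fin N) (Fin N) ℂ)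
    (hZ : Z = X.map (fun a => (a : ℂ)) + Complex.I • Y.map (fun a => (a : ℂ)))
    (C : Matrix (Fin N) (Fin N ⊕ Fin N) ℂ)
    (hC : C = Complex.I • ((Ysq⁻¹).map (fun a => (a : ℂ)) * fromCols (-Z) 1))
    (Sg : Matrix (Fin N ⊕ Fin N) (Fin N ⊕ Fin N) ℝ)
    (hSg : Sg = fromBlocks 0 1 (-1) 0) :
    Sg * (Cᴴ * C).map Complex.im = -1 :=
  stmt3_general N X Y Ysq hX hY hYpd hYsqSym hYsq Z hZ C hC Sg hSg
end

section
/- Let X, Y be real symmetric N×N matrices with Y positive definite, Z = X + iY, and C = i Y^{-1/2} [−Z, I_N]. Then Σ·Re(C†C)·Σᵀ equals the block matrix [[Y^{-1}, Y^{-1}X], [X Y^{-1}, X Y^{-1} X + Y]], where Σ = [[0, I_N], [−I_N, 0]]. -/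
/-!
Write `[-Z, 1] = A + i B` with the real blocks `A = [-X, 1]` and `B = [-Y, 0]`. Since `Ysq⁻¹` is
real symmetric with square `Y⁻¹`, `C†C = (A + i B)† Y⁻¹ (A + i B)`, whose real part is
`Aᵀ Y⁻¹ A + Bᵀ Y⁻¹ B`. Conjugating by `Σ` replaces `A, B` by `A Σᵀ = [1, X]` and `B Σᵀ = [0, Y]`,
and block multiplication gives the claimed matrix, the corner `Y Y⁻¹ Y = Y` using invertibility.
-/

open Matrix

section Complexify

variable {m n o : Type*}

lemma conjTranspose_map_ofReal (A : Matrix m n ℝ) :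
    (A.map (fun a => (a : ℂ)))ᴴ = Aᵀ.map (fun a => (a : ℂ)) := by
  ext i j
  simp

lemma map_ofReal_mul [Fintype n] (A : Matrix m n ℝ) (B : Matrix n o ℝ) :
    (A * B).map (fun a => (a : ℂ)) = A.map (fun a => (a : ℂ)) * B.map (fun a => (a : ℂ)) :=
  Matrix.map_mul (f := Complex.ofRealHom)

lemma map_ofReal_add (A B : Matrix m n ℝ) :
    (A + B).map (fun a => (a : ℂ)) = A.map (fun a => (a : ℂ)) + B.map (fun a => (a : ℂ)) :=
  Matrix.map_add _ Complex.ofReal_add A B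

lemma map_ofReal_sub (A B : Matrix m n ℝ) :
    (A - B).map (fun a => (a : ℂ)) = A.map (fun a => (a : ℂ)) - B.map (fun a => (a : ℂ)) :=
  Matrix.map_sub _ Complex.ofReal_sub A B

lemma map_re_add_I_smul (P Q : Matrix m n ℝ) :
    (P.map (fun a => (a : ℂ)) + Complex.I • Q.map (fun a => (a : ℂ))).map Complex.re = P := by
  ext i j
  simp

lemma conjTranspose_mul_mul_ofReal_add_I_smul [Fintype m] (A B : Matrix m n ℝ)
    (W : Matrix m m ℝ) :
    (A.map (fun a => (a : ℂ)) + Complex.I • B.map (fun a => (a : ℂ)))ᴴ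
        * W.map (fun a => (a : ℂ)) * (A.map (fun a => (a : ℂ)) + Complex.I • B.map (fun a => (a : ℂ)))
      = (Aᵀ * W * A + Bᵀ * W * B).map (fun a => (a : ℂ))
        + Complex.I • (Aᵀ * W * B - Bᵀ * W * A).map (fun a => (a : ℂ)) := by
  simp only [conjTranspose_add, conjTranspose_smul, conjTranspose_map_ofReal, Complex.star_def,
    Complex.conj_I, map_ofReal_add, map_ofReal_sub, map_ofReal_mul, Matrix.add_mul, Matrix.mul_add,
    Matrix.smul_mul, Matrix.mul_smul]
  simp only [smul_add, smul_smul, mul_neg, Complex.I_mul_I, neg_neg, one_smul]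
  module

lemma map_re_conjTranspose_mul_mul_ofReal_add_I_smul [Fintype m] (A B : Matrix m n ℝ)
    (W : Matrix m m ℝ) :
    ((A.map (fun a => (a : ℂ)) + Complex.I • B.map (fun a => (a : ℂ)))ᴴ
        * W.map (fun a => (a : ℂ)) * (A.map (fun a => (a : ℂ)) + Complex.I • B.map (fun a => (a : ℂ)))
      ).map Complex.re = Aᵀ * W * A + Bᵀ * W * B := by
  rw [conjTranspose_mul_mul_ofReal_add_I_smul, map_re_add_I_smul]

end Complexify

section Blocks

variable {R : Type*} [CommRing R] {m n : Type*}

lemma transpose_fromCols_mul_mul_fromCols [Fintype m] (P Q : Matrix m n R) (W : Matrix m m R) :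
    (fromCols P Q)ᵀ * W * fromCols P Q
      = fromBlocks (Pᵀ * W * P) (Pᵀ * W * Q) (Qᵀ * W * P) (Qᵀ * W * Q) := by
  rw [transpose_fromCols, fromRows_mul, fromRows_mul_fromCols]

lemma fromCols_mul_transpose_fromBlocks_zero_one_neg_one_zero [Fintype n] [DecidableEq n]
    (P Q : Matrix m n R) :
    fromCols P Q * (fromBlocks 0 1 (-1) 0 : Matrix (n ⊕ n) (n ⊕ n) R)ᵀ = fromCols Q (-P) := by
  rw [fromBlocks_transpose, fromCols_mul_fromBlocks]
  simp

lemma mul_transpose_mul_mul_mul_transpose {l : Type*} [Fintype m] [Fintype n]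
    (S : Matrix l n R) (A : Matrix m n R) (W : Matrix m m R) :
    S * (Aᵀ * W * A) * Sᵀ = (A * Sᵀ)ᵀ * W * (A * Sᵀ) := by
  simp only [transpose_mul, transpose_transpose, Matrix.mul_assoc]

end Blocks

theorem stmt5_general (N : ℕ)
    (X Y Ysq : Matrix (Fin N) (Fin N) ℝ)
    (hX : X.IsSymm) (hY : Y.IsSymm) (hYpd : Y.PosDef)
    (hYsqSym : Ysq.IsSymm) (hYsq : Ysq * Ysq = Y)
    (Z : Matrix (Fin N) (Fin N) ℂ)
    (hZ : Z = X.map (fun a => (a : ℂ)) + Complex.I • Y.map (fun a => (a : ℂ)))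
    (C : Matrix (Fin N) (Fin N ⊕ Fin N) ℂ)
    (hC : C = Complex.I • ((Ysq⁻¹).map (fun a => (a : ℂ)) * fromCols (-Z) 1))
    (Sg : Matrix (Fin N ⊕ Fin N) (Fin N ⊕ Fin N) ℝ)
    (hSg : Sg = fromBlocks 0 1 (-1) 0) :
    Sg * (Cᴴ * C).map Complex.re * Sgᵀ
      = fromBlocks Y⁻¹ (Y⁻¹ * X) (X * Y⁻¹) (X * Y⁻¹ * X + Y) := by
  have hM : fromCols (-Z) (1 : Matrix (Fin N) (Fin N) ℂ) = (fromCols (-X) 1).map (fun a => (a : ℂ))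
      + Complex.I • (fromCols (-Y) 0).map (fun a => (a : ℂ)) := by
    subst hZ
    ext i (j | j) <;> simp [add_comm, one_apply, apply_ite]
  have hCC : Cᴴ * C = (fromCols (-Z) (1 : Matrix (Fin N) (Fin N) ℂ))ᴴ
      * (Y⁻¹).map (fun a => (a : ℂ)) * fromCols (-Z) 1 := by
    rw [hC, conjTranspose_smul, conjTranspose_mul, conjTranspose_map_ofReal, transpose_nonsing_inv,
      hYsqSym.eq, Matrix.smul_mul, Matrix.mul_smul, smul_smul, Complex.star_def, Complex.conj_I,
      neg_mul, Complex.I_mul_I, neg_neg, one_smul, ← hYsq, Matrix.mul_inv_rev, map_ofReal_mul]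
    simp only [Matrix.mul_assoc]
  have hYY : Y * Y⁻¹ = 1 := mul_nonsing_inv Y (isUnit_iff_ne_zero.mpr hYpd.det_pos.ne')
  rw [hCC, hM, map_re_conjTranspose_mul_mul_ofReal_add_I_smul, hSg, Matrix.mul_add, Matrix.add_mul]
  rw [mul_transpose_mul_mul_mul_transpose, mul_transpose_mul_mul_mul_transpose]
  rw [fromCols_mul_transpose_fromBlocks_zero_one_neg_one_zero,
    fromCols_mul_transpose_fromBlocks_zero_one_neg_one_zero, transpose_fromCols_mul_mul_fromCols,
    transpose_fromCols_mul_mul_fromCols, fromBlocks_add]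
  simp only [neg_neg, transpose_one, transpose_zero, hX.eq, hY.eq, hYY, Matrix.one_mul,
    Matrix.mul_one, Matrix.zero_mul, Matrix.mul_zero, add_zero]

/-- Σ Re(C†C) Σᵀ = [[Y⁻¹, Y⁻¹X],[XY⁻¹, XY⁻¹X + Y]]. -/
theorem stmt5 (N : ℕ) (hN : 0 < N)
    (X Y Ysq : Matrix (Fin N) (Fin N) ℝ)
    (hX : X.IsSymm) (hY : Y.IsSymm) (hYpd : Y.PosDef)
    (hYsqPD : Ysq.PosDef) (hYsqSym : Ysq.IsSymm) (hYsq : Ysq * Ysq = Y)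
    (Z : Matrix (Fin N) (Fin N) ℂ)
    (hZ : Z = X.map (fun a => (a : ℂ)) + Complex.I • Y.map (fun a => (a : ℂ)))
    (C : Matrix (Fin N) (Fin N ⊕ Fin N) ℂ)
    (hC : C = Complex.I • ((Ysq⁻¹).map (fun a => (a : ℂ)) * fromCols (-Z) 1))
    (Sg : Matrix (Fin N ⊕ Fin N) (Fin N ⊕ Fin N) ℝ)
    (hSg : Sg = fromBlocks 0 1 (-1) 0) :
    Sg * (Cᴴ * C).map Complex.re * Sgᵀ
      = fromBlocks Y⁻¹ (Y⁻¹ * X) (X * Y⁻¹) (X * Y⁻¹ * X + Y) :=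
  stmt5_general N X Y Ysq hX hY hYpd hYsqSym hYsq Z hZ C hC Sg hSg
end

section
/- Let Q ∈ ℂ^{N×N} and P ∈ ℂ^{N×K}, and suppose Q = T⁻¹ Λ T for an invertible matrix T and a diagonal matrix Λ with distinct diagonal entries. If w = T·(first column of P) has all entries nonzero, then rank([P, QP, Q²P, …, Q^{N−1}P]) = N. -/
open Matrix

/-- if Q = T⁻¹ Λ T with Λ diagonal with distinct entries and the
    transformed first column of P has all entries nonzero, then the
    controllability matrix [P, QP, …, Q^{N-1}P] has rank N. -/
theorem stmt7 (N K : ℕ) (hN : 0 < N) (hK : 0 < K)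
    (Q : Matrix (Fin N) (Fin N) ℂ) (P : Matrix (Fin N) (Fin K) ℂ)
    (T : Matrix (Fin N) (Fin N) ℂ) (hT : IsUnit T.det)
    (lam : Fin N → ℂ) (hlam : Function.Injective lam)
    (hQ : Q = T⁻¹ * Matrix.diagonal lam * T)
    (w : Fin N → ℂ) (hw : w = T.mulVec (fun i => P i ⟨0, hK⟩))
    (hwne : ∀ i, w i ≠ 0)
    (Ctrb : Matrix (Fin N) (Fin N × Fin K) ℂ)
    (hCtrb : Ctrb = Matrix.of fun i jk => (Q ^ (jk.1.val) * P) i jk.2) :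
    Ctrb.rank = N := by
  have hTi : T⁻¹ * T = 1 := nonsing_inv_mul T hT
  have hTT : T * T⁻¹ = 1 := mul_nonsing_inv T hT
  have hQpow : ∀ j : ℕ, Q ^ j = T⁻¹ * Matrix.diagonal (fun k => lam k ^ j) * T := by
    intro j
    induction j with
    | zero =>
      have h1 : (Matrix.diagonal fun k : Fin N => (lam k) ^ 0) = (1 : Matrix (Fin N) (Fin N) ℂ) := by
        simp [Matrix.diagonal_one]
      rw [pow_zero, h1, Matrix.mul_one, hTi]
    | succ n ih =>
      rw [pow_succ, ih, hQ]
      simp only [Matrix.mul_assoc]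
      rw [← Matrix.mul_assoc T T⁻¹, hTT, Matrix.one_mul,
        ← Matrix.mul_assoc (Matrix.diagonal fun k => lam k ^ n) (Matrix.diagonal lam) T,
        Matrix.diagonal_mul_diagonal]
      have hfun : (fun k => lam k ^ n * lam k) = fun k => lam k ^ (n + 1) := by
        funext k; rw [pow_succ]
      rw [hfun]
  set j0 : Fin K := ⟨0, hK⟩
  set E : Matrix (Fin N × Fin K) (Fin N) ℂ := fun jk j => if jk = (j, j0) then 1 else 0 with hE
  have hTP : ∀ k, (T * P) k j0 = w k := by
    intro k
    rw [hw]
    simp [Matrix.mulVec, Matrix.mul_apply, dotProduct]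
  have hM : Ctrb * E = T⁻¹ * Matrix.diagonal w * Matrix.vandermonde lam := by
    ext i j
    have h1 : (Ctrb * E) i j = Ctrb i (j, j0) := by
      rw [Matrix.mul_apply]
      rw [Finset.sum_eq_single (j, j0)]
      · simp [hE]
      · intro b _ hb; simp [hE, hb]
      · intro h; exact absurd (Finset.mem_univ _) h
    rw [h1, hCtrb]
    simp only [Matrix.of_apply]
    rw [hQpow]
    rw [show T⁻¹ * Matrix.diagonal (fun k => lam k ^ (j : ℕ)) * T * P
        = T⁻¹ * (Matrix.diagonal (fun k => lam k ^ (j : ℕ)) * (T * P)) by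
      simp only [Matrix.mul_assoc]]
    rw [show T⁻¹ * Matrix.diagonal w * Matrix.vandermonde lam
        = T⁻¹ * (Matrix.diagonal w * Matrix.vandermonde lam) by
      simp only [Matrix.mul_assoc]]
    rw [Matrix.mul_apply, Matrix.mul_apply]
    refine Finset.sum_congr rfl fun k _ => ?_
    rw [Matrix.diagonal_mul, Matrix.diagonal_mul, hTP k]
    rw [Matrix.vandermonde_apply]
    ring
  have hdet : IsUnit (T⁻¹ * Matrix.diagonal w * Matrix.vandermonde lam).det := by
    rw [Matrix.det_mul, Matrix.det_mul, Matrix.det_diagonal]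
    exact ((T.isUnit_nonsing_inv_det hT).mul
      (isUnit_iff_ne_zero.mpr (Finset.prod_ne_zero_iff.mpr fun i _ => hwne i))).mul
      (isUnit_iff_ne_zero.mpr (Matrix.det_vandermonde_ne_zero_iff.mpr hlam))
  have hrankM : (Ctrb * E).rank = N := by
    rw [hM, Matrix.rank_of_isUnit _ ((Matrix.isUnit_iff_isUnit_det _).mpr hdet)]
    simp
  have h1 : N ≤ Ctrb.rank := by
    have := Matrix.rank_mul_le_left Ctrb E
    rwa [hrankM] at this
  have h2 : Ctrb.rank ≤ N := by
    simpa using Matrix.rank_le_card_height Ctrb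
  omega
end

section
/- Let Y be real symmetric positive definite N×N, let Υ ∈ ℝ^{1×N} be a nonzero row vector, let U₁ be a unitary matrix whose first column is Y^{1/2}Υᵀ/‖Y^{1/2}Υᵀ‖, let U₂ be a unitary matrix whose first column is (1/√N)(1,…,1)ᵀ, and let Λ = i·diag(α₁,…,α_N) with α₁,…,α_N distinct reals. Set Q = Y^{-1/2}U₁U₂†ΛU₂U₁†Y^{1/2} and P = Υᵀ. Then rank([P, QP, …, Q^{N−1}P]) = N. -/
/-!
With `A = U₂ U₁ᴴ Y^{1/2}` we have `Q = A⁻¹ Λ A`, so the controllability matrix of `(Q, P)` is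
`A⁻¹` times that of `(Λ, A P)`. Since `U₁ e₁` is the normalised `Y^{1/2} Υᵀ` and `U₂ e₁` is the
normalised all-ones vector, `A P = U₂ (‖Y^{1/2} Υᵀ‖ e₁)` is a nonzero constant vector. For a
diagonal matrix and a vector with nonzero entries the controllability matrix is a diagonal matrix
times the Vandermonde matrix of the diagonal entries, here the distinct nodes `i αⱼ`.
-/

open Matrix

namespace Matrix

variable {n R : Type*} [Fintype n] [DecidableEq n] [CommRing R]

def controllabilityMatrix (m : ℕ) (Q : Matrix n n R) (P : n → R) : Matrix n (Fin m) R :=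
  of fun i j => (Q ^ (j : ℕ) *ᵥ P) i

theorem controllabilityMatrix_conj (m : ℕ) {A B : Matrix n n R} (hBA : B * A = 1)
    (D : Matrix n n R) (P : n → R) :
    controllabilityMatrix m (B * D * A) P = B * controllabilityMatrix m D (A *ᵥ P) := by
  let u : (Matrix n n R)ˣ := ⟨B, A, hBA, mul_eq_one_comm.mp hBA⟩
  ext i j
  rw [controllabilityMatrix, of_apply, show (B * D * A) ^ (j : ℕ) = B * D ^ (j : ℕ) * A from
    Units.conj_pow u D j, ← mulVec_mulVec, ← mulVec_mulVec]
  rfl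

theorem rank_controllabilityMatrix_conj (m : ℕ) {A B : Matrix n n R} (hBA : B * A = 1)
    (D : Matrix n n R) (P : n → R) :
    (controllabilityMatrix m (B * D * A) P).rank = (controllabilityMatrix m D (A *ᵥ P)).rank := by
  rw [controllabilityMatrix_conj m hBA, rank_mul_eq_right_of_isUnit_det _ _
    (isUnit_det_of_right_inverse hBA)]

theorem controllabilityMatrix_diagonal {m : ℕ} (d v : Fin m → R) :
    controllabilityMatrix m (diagonal d) v = diagonal v * vandermonde d := by
  ext i j
  simp [controllabilityMatrix, diagonal_pow, mulVec_diagonal, vandermonde, mul_comm]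

theorem rank_controllabilityMatrix_diagonal {K : Type*} [Field K] {m : ℕ} {d v : Fin m → K}
    (hd : Function.Injective d) (hv : ∀ i, v i ≠ 0) :
    (controllabilityMatrix m (diagonal d) v).rank = m := by
  rw [controllabilityMatrix_diagonal, rank_mul_eq_left_of_det_ne_zero _ _
    (det_vandermonde_ne_zero_iff.mpr hd),
    rank_of_det_ne_zero (by simpa [det_diagonal, Finset.prod_ne_zero_iff] using hv),
    Fintype.card_fin]

theorem map_nonsing_inv_mul_map {S : Type*} [CommRing S] (f : R →+* S) {M : Matrix n n R}
    (hM : IsUnit M.det) : (M⁻¹).map f * M.map f = 1 := by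
  rw [← Matrix.map_mul, nonsing_inv_mul M hM, Matrix.map_one _ (map_zero f) (map_one f)]

end Matrix

theorem Real.sqrt_sum_sq_ne_zero {ι : Type*} [Fintype ι] {x : ι → ℝ} (hx : x ≠ 0) :
    √(∑ i, x i ^ 2) ≠ 0 := by
  obtain ⟨i, hi⟩ := Function.ne_iff.mp hx
  exact (Real.sqrt_pos.mpr (Finset.sum_pos' (fun _ _ => sq_nonneg _)
    ⟨i, Finset.mem_univ _, pow_two_pos_of_ne_zero hi⟩)).ne'

theorem stmt12_general (N : ℕ) (hN : 0 < N)
    (Ysq : Matrix (Fin N) (Fin N) ℝ)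
    (hYsqPD : Ysq.PosDef)
    (Υ : Fin N → ℝ) (hΥ : Υ ≠ 0)
    (nrm : ℝ) (hnrm : nrm = Real.sqrt (∑ i, (Ysq.mulVec Υ i) ^ 2))
    (U₁ U₂ : Matrix (Fin N) (Fin N) ℂ)
    (hU₁ : U₁ ∈ Matrix.unitaryGroup (Fin N) ℂ)
    (hU₂ : U₂ ∈ Matrix.unitaryGroup (Fin N) ℂ)
    (hU₁col : ∀ i, U₁ i ⟨0, hN⟩ = ((Ysq.mulVec Υ i / nrm : ℝ) : ℂ))
    (hU₂col : ∀ i, U₂ i ⟨0, hN⟩ = ((1 / Real.sqrt N : ℝ) : ℂ))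
    (α : Fin N → ℝ) (hα : Function.Injective α)
    (Λ : Matrix (Fin N) (Fin N) ℂ)
    (hΛ : Λ = Matrix.diagonal (fun j => Complex.I * (α j : ℝ)))
    (Q : Matrix (Fin N) (Fin N) ℂ)
    (hQ : Q = (Ysq⁻¹).map (fun a => (a : ℂ)) * (U₁ * U₂ᴴ * Λ * U₂ * U₁ᴴ) *
              Ysq.map (fun a => (a : ℂ)))
    (P : Fin N → ℂ) (hP : P = fun i => ((Υ i : ℝ) : ℂ))
    (Ctrb : Matrix (Fin N) (Fin N) ℂ)
    (hCtrb : Ctrb = Matrix.of fun i j => (Q ^ (j.val)).mulVec P i) :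
    Ctrb.rank = N := by
  set e₁ : Fin N := ⟨0, hN⟩
  set A := U₂ * U₁ᴴ * Ysq.map Complex.ofRealHom
  have hU₁l : U₁ᴴ * U₁ = 1 := mem_unitaryGroup_iff'.mp hU₁
  have hU₁r : U₁ * U₁ᴴ = 1 := mem_unitaryGroup_iff.mp hU₁
  have hU₂l : U₂ᴴ * U₂ = 1 := mem_unitaryGroup_iff'.mp hU₂
  have hAinv : (Ysq⁻¹).map Complex.ofRealHom * U₁ * U₂ᴴ * A = 1 := by
    simp only [A, Matrix.mul_assoc]
    rw [← Matrix.mul_assoc U₂ᴴ, hU₂l, Matrix.one_mul, ← Matrix.mul_assoc U₁, hU₁r,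
      Matrix.one_mul, map_nonsing_inv_mul_map _ ((isUnit_iff_isUnit_det _).mp hYsqPD.isUnit)]
  have hnrm_ne : nrm ≠ 0 := hnrm ▸ Real.sqrt_sum_sq_ne_zero
    (by simpa using (mulVec_injective_of_isUnit hYsqPD.isUnit).ne hΥ)
  have hYsqP : Ysq.map Complex.ofRealHom *ᵥ P = U₁ *ᵥ Pi.single e₁ (nrm : ℂ) := by
    ext i
    rw [hP, show (fun i => ((Υ i : ℝ) : ℂ)) = Complex.ofRealHom ∘ Υ from rfl,
      ← RingHom.map_mulVec, mulVec_single]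
    simp [hU₁col, e₁, hnrm_ne]
  have hAP : A *ᵥ P = fun _ => ((1 / Real.sqrt N : ℝ) : ℂ) * nrm := by
    rw [← mulVec_mulVec, hYsqP, mulVec_mulVec, Matrix.mul_assoc, hU₁l, Matrix.mul_one]
    ext i
    simp [hU₂col, e₁]
  have hQA : Q = ((Ysq⁻¹).map Complex.ofRealHom * U₁ * U₂ᴴ) * Λ * A := by
    simp only [hQ, A, Matrix.mul_assoc]
    rfl
  have hnodes : Function.Injective fun j => Complex.I * (α j : ℂ) :=
    ((mul_right_injective₀ Complex.I_ne_zero).comp Complex.ofReal_injective).comp hα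
  have hAP_ne : ((1 / Real.sqrt N : ℝ) : ℂ) * nrm ≠ 0 := by simp [hnrm_ne, hN.ne']
  subst hCtrb hQA hΛ
  rw [← controllabilityMatrix, rank_controllabilityMatrix_conj N hAinv, hAP]
  exact rank_controllabilityMatrix_diagonal hnodes fun _ => hAP_ne

/-- with U₁ having first column Y^{1/2}Υᵀ/‖Y^{1/2}Υᵀ‖, U₂ having
    constant first column 1/√N, and Λ = i diag(α) with distinct α, the pair
    (Q, P) = (Y^{-1/2}U₁U₂†ΛU₂U₁†Y^{1/2}, Υᵀ) is controllable. -/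
theorem stmt12 (N : ℕ) (hN : 0 < N)
    (Y Ysq : Matrix (Fin N) (Fin N) ℝ)
    (hY : Y.IsSymm) (hYpd : Y.PosDef)
    (hYsqPD : Ysq.PosDef) (hYsqSym : Ysq.IsSymm) (hYsq : Ysq * Ysq = Y)
    (Υ : Fin N → ℝ) (hΥ : Υ ≠ 0)
    (nrm : ℝ) (hnrm : nrm = Real.sqrt (∑ i, (Ysq.mulVec Υ i) ^ 2))
    (U₁ U₂ : Matrix (Fin N) (Fin N) ℂ)
    (hU₁ : U₁ ∈ Matrix.unitaryGroup (Fin N) ℂ)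
    (hU₂ : U₂ ∈ Matrix.unitaryGroup (Fin N) ℂ)
    (hU₁col : ∀ i, U₁ i ⟨0, hN⟩ = ((Ysq.mulVec Υ i / nrm : ℝ) : ℂ))
    (hU₂col : ∀ i, U₂ i ⟨0, hN⟩ = ((1 / Real.sqrt N : ℝ) : ℂ))
    (α : Fin N → ℝ) (hα : Function.Injective α)
    (Λ : Matrix (Fin N) (Fin N) ℂ)
    (hΛ : Λ = Matrix.diagonal (fun j => Complex.I * (α j : ℝ)))
    (Q : Matrix (Fin N) (Fin N) ℂ)
    (hQ : Q = (Ysq⁻¹).map (fun a => (a : ℂ)) * (U₁ * U₂ᴴ * Λ * U₂ * U₁ᴴ) *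
              Ysq.map (fun a => (a : ℂ)))
    (P : Fin N → ℂ) (hP : P = fun i => ((Υ i : ℝ) : ℂ))
    (Ctrb : Matrix (Fin N) (Fin N) ℂ)
    (hCtrb : Ctrb = Matrix.of fun i j => (Q ^ (j.val)).mulVec P i) :
    Ctrb.rank = N :=
  stmt12_general N hN Ysq hYsqPD Υ hΥ nrm hnrm U₁ U₂ hU₁ hU₂ hU₁col hU₂col α hα Λ hΛ Q hQ P hP Ctrb
    hCtrb
end

section
/- Let G₁ = (Ĥ₁, L̂₁) and G₂ = (Ĥ₂, L̂₂) be linear quantum subsystems on modes ξ̂₁, ξ̂₂ with Ĥ_j = 0 and coupling matrices C₁ = [[cosh α, i cosh α],[−sinh α, i sinh α]], C₂ = [[−sinh α, i sinh α],[cosh α, i cosh α]] (so L̂_j = C_j ξ̂_j). Then the cascade G = G₂ ◁ G₁ has total coupling matrix C = [C₁, C₂]·𝒫₂ᵀ satisfying, after the permutation to (q₁,q₂,p₁,p₂) ordering, C = i Y^{-1/2}[−Z, I₂] where X = 0, Y = [[cosh 2α, −sinh 2α],[−sinh 2α, cosh 2α]], Z = X + iY. -/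
open Matrix Complex

/-!
Write `hypRot a` for the symmetric matrix with entries `cosh a` on and `sinh a` off the diagonal.
These form a one-parameter group of positive definite matrices, and `Y = hypRot (-2α)`, so by
uniqueness of positive square roots `Y^{1/2} = hypRot (-α)` and `Y^{-1/2} = hypRot α`. Since
`Y^{-1/2} Y = Y^{1/2}`, the right-hand side is `[Y^{1/2}, i Y^{-1/2}]`, and the permutation
`𝒫₂` turns `[C₁, C₂]` into exactly this block matrix.
-/

noncomputable def hypRot (a : ℝ) : Matrix (Fin 2) (Fin 2) ℝ :=
  !![Real.cosh a, Real.sinh a; Real.sinh a, Real.cosh a]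

lemma hypRot_mul_hypRot (a b : ℝ) : hypRot a * hypRot b = hypRot (a + b) := by
  ext i j
  fin_cases i <;> fin_cases j <;>
    simp [hypRot, Real.cosh_add, Real.sinh_add] <;> ring

lemma hypRot_zero : hypRot 0 = 1 := by
  ext i j
  fin_cases i <;> fin_cases j <;> simp [hypRot]

lemma inv_hypRot (a : ℝ) : (hypRot a)⁻¹ = hypRot (-a) :=
  inv_eq_left_inv (by rw [hypRot_mul_hypRot, neg_add_cancel, hypRot_zero])

lemma isUnit_hypRot (a : ℝ) : IsUnit (hypRot a) :=
  (isUnit_iff_isUnit_det _).mpr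
    (isUnit_det_of_left_inverse (by rw [hypRot_mul_hypRot, neg_add_cancel, hypRot_zero] :
      hypRot (-a) * hypRot a = 1))

lemma isHermitian_hypRot (a : ℝ) : (hypRot a).IsHermitian := by
  ext i j
  fin_cases i <;> fin_cases j <;> rfl

lemma posDef_hypRot (a : ℝ) : (hypRot a).PosDef := by
  have hsquare : hypRot a = (hypRot (a / 2))ᴴ * hypRot (a / 2) := by
    rw [(isHermitian_hypRot _).eq, hypRot_mul_hypRot, add_halves]
  rw [hsquare]
  exact PosDef.conjTranspose_mul_self _ (mulVec_injective_iff_isUnit.mpr (isUnit_hypRot _))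

open scoped MatrixOrder Matrix.Norms.L2Operator in
lemma eq_hypRot_of_mul_self {S : Matrix (Fin 2) (Fin 2) ℝ} (hS : S.PosSemidef) (a : ℝ)
    (h : S * S = hypRot (2 * a)) : S = hypRot a := by
  rw [← CFC.mul_self_eq_mul_self_iff S (hypRot a) hS.nonneg (posDef_hypRot a).posSemidef.nonneg,
    h, hypRot_mul_hypRot, two_mul]

lemma interleave_mul_transpose {R : Type*} [Semiring R] (C₁ C₂ : Matrix (Fin 2) (Fin 2) R) :
    !![C₁ 0 0, C₁ 0 1, C₂ 0 0, C₂ 0 1; C₁ 1 0, C₁ 1 1, C₂ 1 0, C₂ 1 1] *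
      (!![1,0,0,0; 0,0,1,0; 0,1,0,0; 0,0,0,1] : Matrix (Fin 4) (Fin 4) R)ᵀ =
    !![C₁ 0 0, C₂ 0 0, C₁ 0 1, C₂ 0 1; C₁ 1 0, C₂ 1 0, C₁ 1 1, C₂ 1 1] := by
  ext i j
  fin_cases i <;> fin_cases j <;> simp [mul_apply, Fin.sum_univ_four]

lemma I_smul_inv_mul_eq_of_mul_self {S Y : Matrix (Fin 2) (Fin 2) ℝ} (hS : IsUnit S) (h : S * S = Y)
    {Z : Matrix (Fin 2) (Fin 2) ℂ} (hZ : Z = I • Y.map (fun a => (a : ℂ))) :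
    I • ((S⁻¹).map (fun a => (a : ℂ)) * !![-Z 0 0, -Z 0 1, 1, 0; -Z 1 0, -Z 1 1, 0, 1]) =
      !![(S 0 0 : ℂ), S 0 1, I * S⁻¹ 0 0, I * S⁻¹ 0 1;
         S 1 0, S 1 1, I * S⁻¹ 1 0, I * S⁻¹ 1 1] := by
  have hSY : ∀ i j, S⁻¹ i 0 * Y 0 j + S⁻¹ i 1 * Y 1 j = S i j := by
    have : S⁻¹ * Y = S := by
      rw [← h, ← Matrix.mul_assoc, nonsing_inv_mul _ ((isUnit_iff_isUnit_det _).mp hS),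
        Matrix.one_mul]
    simpa [mul_apply, Fin.sum_univ_two] using congrFun₂ this
  subst hZ
  ext i j
  fin_cases i <;> fin_cases j <;> simp [mul_apply, Fin.sum_univ_two]
  all_goals
    rw [← hSY]
    push_cast
    ring_nf
    rw [I_sq]
    ring

theorem stmt13_general (α : ℝ)
    (C₁ C₂ : Matrix (Fin 2) (Fin 2) ℂ)
    (hC₁ : C₁ = !![(Real.cosh α : ℂ), Complex.I * (Real.cosh α : ℂ);
                   (-Real.sinh α : ℂ), Complex.I * (Real.sinh α : ℂ)])
    (hC₂ : C₂ = !![(-Real.sinh α : ℂ), Complex.I * (Real.sinh α : ℂ);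
                   (Real.cosh α : ℂ), Complex.I * (Real.cosh α : ℂ)])
    (A : Matrix (Fin 2) (Fin 4) ℂ)
    (hA : A = !![C₁ 0 0, C₁ 0 1, C₂ 0 0, C₂ 0 1;
                 C₁ 1 0, C₁ 1 1, C₂ 1 0, C₂ 1 1])
    (P₂ : Matrix (Fin 4) (Fin 4) ℂ)
    (hP₂ : P₂ = !![1,0,0,0; 0,0,1,0; 0,1,0,0; 0,0,0,1])
    (Y Ysq : Matrix (Fin 2) (Fin 2) ℝ)
    (hYdef : Y = !![Real.cosh (2*α), -Real.sinh (2*α);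
                    -Real.sinh (2*α), Real.cosh (2*α)])
    (hYsqPD : Ysq.PosDef) (hYsq : Ysq * Ysq = Y)
    (Z : Matrix (Fin 2) (Fin 2) ℂ)
    (hZ : Z = Complex.I • Y.map (fun a => (a : ℂ)))
    (B : Matrix (Fin 2) (Fin 4) ℂ)
    (hB : B = !![-Z 0 0, -Z 0 1, 1, 0;
                 -Z 1 0, -Z 1 1, 0, 1]) :
    A * P₂ᵀ = Complex.I • ((Ysq⁻¹).map (fun a => (a : ℂ)) * B) := by
  have hY : Y = hypRot (2 * -α) := by
    rw [hYdef, hypRot, mul_neg, Real.cosh_neg, Real.sinh_neg]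
  have hYsqEq : Ysq = hypRot (-α) := eq_hypRot_of_mul_self hYsqPD.posSemidef (-α) (hYsq.trans hY)
  rw [hA, hP₂, interleave_mul_transpose, hB, I_smul_inv_mul_eq_of_mul_self hYsqPD.isUnit hYsq hZ, hYsqEq,
    inv_hypRot, neg_neg, hC₁, hC₂]
  ext i j
  fin_cases i <;> fin_cases j <;> simp [hypRot]

/-- the cascade coupling matrix [C₁, C₂]𝒫₂ᵀ equals
    i Y^{-1/2}[−Z, I₂] for the two-mode squeezed state (X = 0,
    Y = [[cosh 2α, −sinh 2α],[−sinh 2α, cosh 2α]], Z = X + iY). -/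
theorem stmt13 (α : ℝ)
    (C₁ C₂ : Matrix (Fin 2) (Fin 2) ℂ)
    (hC₁ : C₁ = !![(Real.cosh α : ℂ), Complex.I * (Real.cosh α : ℂ);
                   (-Real.sinh α : ℂ), Complex.I * (Real.sinh α : ℂ)])
    (hC₂ : C₂ = !![(-Real.sinh α : ℂ), Complex.I * (Real.sinh α : ℂ);
                   (Real.cosh α : ℂ), Complex.I * (Real.cosh α : ℂ)])
    (A : Matrix (Fin 2) (Fin 4) ℂ)
    (hA : A = !![C₁ 0 0, C₁ 0 1, C₂ 0 0, C₂ 0 1;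
                 C₁ 1 0, C₁ 1 1, C₂ 1 0, C₂ 1 1])
    (P₂ : Matrix (Fin 4) (Fin 4) ℂ)
    (hP₂ : P₂ = !![1,0,0,0; 0,0,1,0; 0,1,0,0; 0,0,0,1])
    (Y Ysq : Matrix (Fin 2) (Fin 2) ℝ)
    (hYdef : Y = !![Real.cosh (2*α), -Real.sinh (2*α);
                    -Real.sinh (2*α), Real.cosh (2*α)])
    (hYsqPD : Ysq.PosDef) (hYsqSym : Ysq.IsSymm) (hYsq : Ysq * Ysq = Y)
    (Z : Matrix (Fin 2) (Fin 2) ℂ)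
    (hZ : Z = Complex.I • Y.map (fun a => (a : ℂ)))
    (B : Matrix (Fin 2) (Fin 4) ℂ)
    (hB : B = !![-Z 0 0, -Z 0 1, 1, 0;
                 -Z 1 0, -Z 1 1, 0, 1]) :
    A * P₂ᵀ = Complex.I • ((Ysq⁻¹).map (fun a => (a : ℂ)) * B) :=
  stmt13_general α C₁ C₂ hC₁ hC₂ A hA P₂ hP₂ Y Ysq hYdef hYsqPD hYsq Z hZ B hB
end
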